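/- For the DRB game on the k-dimensional grid, there exists n0 ∈ ℕ (depending only on k and the granularity γ) such that for all n ≥ n0: for every strategy profile r and every node u with r_u ≠ k, the payoff of u in r is strictly smaller than the payoff of u in the navigable profile r ≡ k; consequently, the navigable profile r ≡ k is a strong Nash equilibrium (in particular it is Pareto-optimal). -/

import Mathlib

open Finset

noncomputable section

namespace DRB

/-- Nodes of the `k`-dimensional grid (torus) with side length `n`. -/
abbrev Node (n k : ℕ) := Fin k → Fin n

/-- Grid (Manhattan) distance on the torus:
`d_M(u,v) = Σ_i min(|u_i - v_i|, n - |u_i - v_i|)`. -/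
def dM (n k : ℕ) (u v : Node n k) : ℕ :=
  ∑ i, min ((u i : ℤ) - (v i : ℤ)).natAbs (n - ((u i : ℤ) - (v i : ℤ)).natAbs)

/-- All nodes different from `u`. -/
def others (n k : ℕ) (u : Node n k) : Finset (Node n k) :=
  Finset.univ.filter (fun v => v ≠ u)

/-- Normalization constant `c(s) = Σ_{v ≠ u} d_M(u,v)^{-s}` for node `u`. -/
def cnorm (n k : ℕ) (u : Node n k) (s : ℝ) : ℝ :=
  ∑ v ∈ others n k u, (dM n k u v : ℝ) ^ (-s)

/-- Long-range link probability `p_u(v, s) = d_M(u,v)^{-s} / c(s)`. -/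
def linkProb (n k : ℕ) (u v : Node n k) (s : ℝ) : ℝ :=
  (dM n k u v : ℝ) ^ (-s) / cnorm n k u s

/-- Link distance `D(s) = Σ_{v ≠ u} p_u(v,s) · d_M(u,v)` of node `u`. -/
def linkDist (n k : ℕ) (u : Node n k) (s : ℝ) : ℝ :=
  ∑ v ∈ others n k u, linkProb n k u v s * (dM n k u v : ℝ)

/-- Reciprocity `P_u(r) = Σ_{v ≠ u} p_u(v, r_u) · p_v(u, r_v)`. -/
def recip (n k : ℕ) (r : Node n k → ℝ) (u : Node n k) : ℝ :=
  ∑ v ∈ others n k u, linkProb n k u v (r u) * linkProb n k v u (r v)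

/-- DRB payoff `π_u(r) = D(r_u) · P_u(r)`. -/
def payoff (n k : ℕ) (r : Node n k → ℝ) (u : Node n k) : ℝ :=
  linkDist n k u (r u) * recip n k r u

/-- Membership in the strategy set `Σ = {0, γ, 2γ, 3γ, ...}`. -/
def InSigma (γ s : ℝ) : Prop := ∃ m : ℕ, s = m * γ

/-- A valid strategy profile (every coordinate lies in `Σ`). -/
def ValidProfile (n k : ℕ) (γ : ℝ) (r : Node n k → ℝ) : Prop :=
  ∀ u, InSigma γ (r u)

/-- Nash equilibrium of the DRB game with strategy set `Σ` of granularity `γ`. -/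
def IsNash (n k : ℕ) (γ : ℝ) (r : Node n k → ℝ) : Prop :=
  ∀ u : Node n k, ∀ s : ℝ, InSigma γ s →
    payoff n k r u ≥ payoff n k (Function.update r u s) u

/-- Strict Nash equilibrium. -/
def IsStrictNash (n k : ℕ) (γ : ℝ) (r : Node n k → ℝ) : Prop :=
  ∀ u : Node n k, ∀ s : ℝ, InSigma γ s → s ≠ r u →
    payoff n k r u > payoff n k (Function.update r u s) u

/-- `t`-strong Nash equilibrium: no coalition of size ≤ `t` has a weakly
improving joint deviation that strictly improves some member. -/
def IsTStrongNash (n k : ℕ) (γ : ℝ) (t : ℕ) (r : Node n k → ℝ) : Prop :=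
  ¬ ∃ (C : Finset (Node n k)) (s : Node n k → ℝ),
      C.Nonempty ∧ C.card ≤ t ∧ (∀ u ∈ C, InSigma γ (s u)) ∧
      (∀ u ∈ C,
        payoff n k (fun v => if v ∈ C then s v else r v) u ≥ payoff n k r u) ∧
      (∃ u ∈ C,
        payoff n k (fun v => if v ∈ C then s v else r v) u > payoff n k r u)

/-- Strong Nash equilibrium: coalitions of any size. -/
def IsStrongNash (n k : ℕ) (γ : ℝ) (r : Node n k → ℝ) : Prop :=
  ¬ ∃ (C : Finset (Node n k)) (s : Node n k → ℝ),
      C.Nonempty ∧ (∀ u ∈ C, InSigma γ (s u)) ∧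
      (∀ u ∈ C,
        payoff n k (fun v => if v ∈ C then s v else r v) u ≥ payoff n k r u) ∧
      (∃ u ∈ C,
        payoff n k (fun v => if v ∈ C then s v else r v) u > payoff n k r u)

/-- `b_u(j)`: the number of nodes at grid distance exactly `j` from `u`. -/
def countAt (n k : ℕ) (u : Node n k) (j : ℕ) : ℕ :=
  (Finset.univ.filter (fun v => v ≠ u ∧ dM n k u v = j)).card

/-- One asynchronous best-response step: a single node switches to a best
response to the current profile, all other strategies unchanged. -/
def BRStep (n k : ℕ) (γ : ℝ) (r r' : Node n k → ℝ) : Prop :=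
  ∃ (u : Node n k) (s : ℝ), InSigma γ s ∧
    (∀ t : ℝ, InSigma γ t →
      payoff n k (Function.update r u s) u ≥ payoff n k (Function.update r u t) u) ∧
    r' = Function.update r u s

/-- One synchronous best-response step: every node simultaneously switches
to a best response to the current profile `r`. -/
def SyncStep (n k : ℕ) (γ : ℝ) (r r' : Node n k → ℝ) : Prop :=
  ∀ u : Node n k, InSigma γ (r' u) ∧
    ∀ t : ℝ, InSigma γ t →
      payoff n k (Function.update r u (r' u)) u ≥
        payoff n k (Function.update r u t) u

end DRB

/-!
Write `d = d_M(u,v)` and `Λ = (log₂ n_D + 1) 4^k`. Splitting the torus into dyadic shells around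
`u` gives `c(k) ≤ Λ`. The ball of radius `d` around `v` holds at least `d^k / (2 k^k)` other
nodes, so whatever `v` plays, `p_v(u, ·) ≤ 2 k^k d^{-k}`; hence for `r_u = s` we get
`P_u(r) ≤ 2 k^k Λ / c(s)` and `D(s) ≤ n_D^a Λ / c(s)` whenever `a ≥ 0` and `1 - s ≤ a - k`.

The navigable node earns at least `(n^k - 1) n_D^{1-k} / Λ³`, a neighbour at distance `1` alone
giving `P_u ≥ Λ⁻²`. A strategy `s ≠ k` on the grid `γℕ` has `s ≤ k - γ`, where
`c(s) ≥ (n^k - 1) n_D^{-s}` is used, or `s ≥ k + γ`, where `c(s) ≥ 1` is; either way its payoff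
is at most `2 k^{4k} Λ⁵ n_D^{-γ}` times the navigable one, and this factor tends to `0`.
Any coalition deviation that changes a member's strategy therefore strictly hurts that member.
-/

namespace DRB

/-- The paper's `n_D`. -/
def maxDist (n k : ℕ) : ℕ := k * (n / 2)

def puncturedBall (n k : ℕ) (u : Node n k) (d : ℕ) : Finset (Node n k) :=
  (others n k u).filter (fun v => dM n k u v ≤ d)

section Geometry

variable {n k : ℕ}

lemma mem_others {u v : Node n k} : v ∈ others n k u ↔ v ≠ u := by simp [others]

lemma card_others (u : Node n k) : #(others n k u) = n ^ k - 1 := by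
  rw [others, filter_ne', card_erase_of_mem (mem_univ u), card_univ]
  simp

lemma dM_comm (u v : Node n k) : dM n k u v = dM n k v u := by
  unfold dM
  refine sum_congr rfl fun i _ => ?_
  rw [← Int.natAbs_neg, neg_sub]

lemma dM_le_maxDist (u v : Node n k) : dM n k u v ≤ maxDist n k := by
  calc dM n k u v ≤ ∑ _i : Fin k, n / 2 := sum_le_sum fun i _ => by
        have := (u i).isLt; have := (v i).isLt; omega
  _ = maxDist n k := by simp [maxDist]

lemma one_le_dM {u v : Node n k} (h : v ≠ u) : 1 ≤ dM n k u v := by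
  obtain ⟨i, hi⟩ : ∃ i, u i ≠ v i := by
    by_contra! hc
    exact h (funext fun i => (hc i).symm)
  have hi' : (u i : ℤ) ≠ v i := fun h => hi (Fin.ext (by exact_mod_cast h))
  have := (u i).isLt; have := (v i).isLt
  calc 1 ≤ min ((u i : ℤ) - v i).natAbs (n - ((u i : ℤ) - v i).natAbs) := by omega
  _ ≤ dM n k u v := single_le_sum (f := fun i =>
        min ((u i : ℤ) - v i).natAbs (n - ((u i : ℤ) - v i).natAbs)) (by simp) (mem_univ i)

lemma dM_add (u e : Node n k) : dM n k u (u + e) = ∑ i, min (e i).val (n - (e i).val) := by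
  refine sum_congr rfl fun i _ => ?_
  have hval : ((u i + e i : Fin n) : ℕ) = ((u i).val + (e i).val) % n := by simp [Fin.add_def]
  have := (u i).isLt; have := (e i).isLt
  rcases Nat.lt_or_ge ((u i).val + (e i).val) n with h | h
  · rw [Pi.add_apply, hval, Nat.mod_eq_of_lt h]; push_cast; omega
  · rw [Pi.add_apply, hval, Nat.mod_eq_sub_mod h, Nat.mod_eq_of_lt (by omega)]
    push_cast [Nat.cast_sub h]
    omega

lemma exists_dM_eq_one (hn : 2 ≤ n) (hk : 1 ≤ k) (u : Node n k) :
    ∃ w ∈ others n k u, dM n k u w = 1 := by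
  have : NeZero n := ⟨by omega⟩
  let i₀ : Fin k := ⟨0, hk⟩
  have hdist : dM n k u (u + Pi.single i₀ ⟨1, hn⟩) = 1 := by
    rw [dM_add, Fintype.sum_eq_single i₀ fun i hi => by simp [hi]]
    simp only [Pi.single_eq_same, inf_eq_left]
    omega
  refine ⟨_, mem_others.mpr fun h => ?_, hdist⟩
  rw [h] at hdist
  simp [dM] at hdist

lemma dM_eq_sum_sub [NeZero n] (u v : Node n k) :
    dM n k u v = ∑ i, min (v i - u i).val (n - (v i - u i).val) := by
  simpa using dM_add u (v - u)

lemma card_puncturedBall_ge {m : ℕ} (hm : 2 * m + 1 ≤ n) (v : Node n k) :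
    (2 * m + 1) ^ k - 1 ≤ #(puncturedBall n k v (k * m)) := by
  have : NeZero n := ⟨by omega⟩
  -- the offsets `-m, …, m`: `j ≤ m` stands for `j` and `j > m` for `m - j`
  let c : Fin (2 * m + 1) → Fin n := fun j =>
    ⟨if j.val ≤ m then j.val else n - (j.val - m), by have := j.isLt; split <;> omega⟩
  have hc_le : ∀ j, min (c j).val (n - (c j).val) ≤ m := by
    intro j; have := j.isLt; simp only [c]; split <;> omega
  have hc_inj : Function.Injective c := by
    intro j j' h
    have hv := congrArg Fin.val h
    have := j.isLt; have := j'.isLt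
    simp only [c] at hv
    apply Fin.ext
    split at hv <;> split at hv <;> omega
  have hc_zero : c 0 = 0 := Fin.ext (by simp [c])
  let Φ : (Fin k → Fin (2 * m + 1)) → Node n k := fun e => v + fun i => c (e i)
  have hΦ_inj : Function.Injective Φ := fun e e' h =>
    funext fun i => hc_inj (add_left_cancel (congrFun h i))
  calc (2 * m + 1) ^ k - 1 = #(univ.erase (0 : Fin k → Fin (2 * m + 1))) := by
        simp [card_erase_of_mem]
  _ ≤ _ := by
    refine card_le_card_of_injOn Φ (fun e he => ?_) hΦ_inj.injOn
    rw [mem_coe, mem_erase] at he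
    rw [mem_coe, puncturedBall, mem_filter, mem_others]
    constructor
    · intro h
      apply he.1
      funext i
      apply hc_inj
      simpa [Φ, hc_zero] using congrFun h i
    · rw [dM_add]
      calc ∑ i, min (c (e i)).val (n - (c (e i)).val) ≤ ∑ _i : Fin k, m :=
            sum_le_sum fun i _ => hc_le (e i)
      _ = k * m := by simp

lemma card_puncturedBall_le (hn : 0 < n) (u : Node n k) (d : ℕ) :
    #(puncturedBall n k u d) ≤ (2 * d + 1) ^ k := by
  have : NeZero n := ⟨hn.ne'⟩
  -- injective on coordinate offsets `b` with `min b (n - b) ≤ d`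
  let code : ℕ → Fin (2 * d + 1) := fun b =>
    ⟨if b ≤ d then b else if n - b ≤ d then d + (n - b) else 2 * d, by split_ifs <;> omega⟩
  have hcoord : ∀ v ∈ puncturedBall n k u d, ∀ i,
      min (v i - u i).val (n - (v i - u i).val) ≤ d := by
    intro v hv i
    rw [puncturedBall, mem_filter, dM_eq_sum_sub] at hv
    exact (single_le_sum (f := fun i => min (v i - u i).val (n - (v i - u i).val))
      (by simp) (mem_univ i)).trans hv.2
  calc #(puncturedBall n k u d) ≤ #(univ : Finset (Fin k → Fin (2 * d + 1))) := by
        refine card_le_card_of_injOn (fun v i => code (v i - u i).val) (by simp)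
          fun v hv w hw hvw => ?_
        suffices v - u = w - u by simpa using this
        funext i
        have h := congrArg Fin.val (congrFun hvw i)
        have := hcoord v hv i; have := hcoord w hw i
        have := (v i - u i).isLt; have := (w i - u i).isLt
        simp only [code] at h
        simp only [Pi.sub_apply]
        exact Fin.ext (by split_ifs at h <;> omega)
  _ = (2 * d + 1) ^ k := by simp

lemma puncturedBall_mono (u : Node n k) {d d' : ℕ} (h : d ≤ d') :
    puncturedBall n k u d ⊆ puncturedBall n k u d' :=
  monotone_filter_right _ fun _ _ hv => hv.trans h

lemma self_mem_puncturedBall {u v : Node n k} (huv : u ≠ v) :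
    u ∈ puncturedBall n k v (dM n k v u) := by
  simp [puncturedBall, mem_others, huv]

lemma pow_dM_le_card_puncturedBall {u v : Node n k} (huv : u ≠ v) :
    dM n k v u ^ k ≤ 2 * k ^ k * #(puncturedBall n k v (dM n k v u)) := by
  set d := dM n k v u
  have hd1 : 1 ≤ d := one_le_dM huv
  have hdD : d ≤ k * (n / 2) := dM_le_maxDist v u
  have hpos : 0 < k * (n / 2) := hd1.trans hdD
  obtain ⟨hk, hn⟩ := CanonicallyOrderedAdd.mul_pos.mp hpos
  -- the largest box of side `2m+1` that fits in the torus and in the ball of radius `d`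
  set m := min (d / k) ((n - 1) / 2)
  have hkm : k * m ≤ d := (Nat.mul_le_mul_left k (min_le_left _ _)).trans (Nat.mul_div_le d k)
  have hd_le : d ≤ k * (2 * m + 1) := by
    rcases le_total (d / k) ((n - 1) / 2) with h | h
    · have : m = d / k := min_eq_left h
      have := Nat.lt_mul_div_succ d hk
      nlinarith
    · have : m = (n - 1) / 2 := min_eq_right h
      exact hdD.trans (Nat.mul_le_mul_left k (by omega))
  have hbox : (2 * m + 1) ^ k ≤ 2 * #(puncturedBall n k v d) := by
    have hbig := (card_puncturedBall_ge (show 2 * m + 1 ≤ n by omega) v).trans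
      (card_le_card (puncturedBall_mono v hkm))
    have hu : 1 ≤ #(puncturedBall n k v d) := card_pos.mpr ⟨u, self_mem_puncturedBall huv⟩
    have hpow : 2 * m + 1 ≤ (2 * m + 1) ^ k := Nat.le_self_pow hk.ne' _
    rcases Nat.eq_zero_or_pos m with hm | hm
    · simp only [hm, mul_zero, zero_add, one_pow]; omega
    · omega
  calc d ^ k ≤ (k * (2 * m + 1)) ^ k := Nat.pow_le_pow_left hd_le k
  _ = k ^ k * (2 * m + 1) ^ k := mul_pow _ _ _
  _ ≤ k ^ k * (2 * #(puncturedBall n k v d)) := Nat.mul_le_mul_left _ hbox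
  _ = 2 * k ^ k * #(puncturedBall n k v d) := by ring

end Geometry

section Normalization

variable {n k : ℕ}

lemma dM_pos {u v : Node n k} (h : v ∈ others n k u) : (0 : ℝ) < dM n k u v := by
  exact_mod_cast one_le_dM (mem_others.mp h)

lemma cnorm_nonneg (u : Node n k) (s : ℝ) : 0 ≤ cnorm n k u s :=
  sum_nonneg fun _ _ => by positivity

lemma linkProb_nonneg (u v : Node n k) (s : ℝ) : 0 ≤ linkProb n k u v s :=
  div_nonneg (by positivity) (cnorm_nonneg u s)

lemma puncturedBall_maxDist (u : Node n k) : puncturedBall n k u (maxDist n k) = others n k u :=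
  filter_true_of_mem fun v _ => dM_le_maxDist u v

lemma card_mul_rpow_le_cnorm {t : ℝ} (ht : 0 ≤ t) (u : Node n k) (d : ℕ) :
    #(puncturedBall n k u d) * (d : ℝ) ^ (-t) ≤ cnorm n k u t := by
  rw [← nsmul_eq_mul]
  refine (card_nsmul_le_sum _ _ _ fun v hv => ?_).trans
    (sum_le_sum_of_subset_of_nonneg (filter_subset _ _) fun _ _ _ => by positivity)
  rw [puncturedBall, mem_filter] at hv
  exact Real.rpow_le_rpow_of_nonpos (dM_pos hv.1) (by exact_mod_cast hv.2) (by linarith)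

lemma one_le_cnorm (hn : 2 ≤ n) (hk : 1 ≤ k) (u : Node n k) (t : ℝ) : 1 ≤ cnorm n k u t := by
  obtain ⟨w, hw, hdw⟩ := exists_dM_eq_one hn hk u
  calc (1 : ℝ) = (dM n k u w : ℝ) ^ (-t) := by simp [hdw]
  _ ≤ cnorm n k u t := single_le_sum (f := fun v => (dM n k u v : ℝ) ^ (-t))
      (fun _ _ => by positivity) hw

lemma cnorm_pos (hn : 2 ≤ n) (hk : 1 ≤ k) (u : Node n k) (t : ℝ) : 0 < cnorm n k u t :=
  one_pos.trans_le (one_le_cnorm hn hk u t)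

lemma linkProb_le_inv_card {t : ℝ} (ht : 0 ≤ t) {u v : Node n k} (huv : u ≠ v) :
    linkProb n k v u t ≤ (#(puncturedBall n k v (dM n k v u)) : ℝ)⁻¹ := by
  have hpos : (0 : ℝ) < (dM n k v u : ℝ) ^ (-t) :=
    Real.rpow_pos_of_pos (dM_pos (mem_others.mpr huv)) _
  have hcard : (0 : ℝ) < #(puncturedBall n k v (dM n k v u)) := by
    exact_mod_cast card_pos.mpr ⟨u, self_mem_puncturedBall huv⟩
  calc linkProb n k v u t
      ≤ (dM n k v u : ℝ) ^ (-t) / (#(puncturedBall n k v (dM n k v u)) * (dM n k v u : ℝ) ^ (-t)) :=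
        div_le_div_of_nonneg_left hpos.le (mul_pos hcard hpos) (card_mul_rpow_le_cnorm ht v _)
  _ = _ := by field_simp

lemma linkProb_le {t : ℝ} (ht : 0 ≤ t) {u v : Node n k} (huv : u ≠ v) :
    linkProb n k v u t ≤ 2 * k ^ k * (dM n k u v : ℝ) ^ (-(k : ℝ)) := by
  have hcard : (0 : ℝ) < #(puncturedBall n k v (dM n k v u)) := by
    exact_mod_cast card_pos.mpr ⟨u, self_mem_puncturedBall huv⟩
  have hpow : (dM n k v u : ℝ) ^ k ≤ 2 * k ^ k * #(puncturedBall n k v (dM n k v u)) := by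
    exact_mod_cast pow_dM_le_card_puncturedBall huv
  rw [dM_comm u v, Real.rpow_neg (by positivity), Real.rpow_natCast]
  refine (linkProb_le_inv_card ht huv).trans ?_
  rw [← div_eq_mul_inv, le_div_iff₀ (pow_pos (dM_pos (mem_others.mpr huv)) k)]
  rwa [inv_mul_eq_div, div_le_iff₀ hcard]

def cnormBound (n k : ℕ) : ℝ := (Nat.log 2 (maxDist n k) + 1) * 4 ^ k

lemma cnormBound_pos : 0 < cnormBound n k := by
  unfold cnormBound
  positivity

lemma card_shell_le (hn : 0 < n) (u : Node n k) (j : ℕ) :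
    #((others n k u).filter fun v => Nat.log 2 (dM n k u v) = j) ≤ (2 ^ (j + 2)) ^ k := by
  calc _ ≤ #(puncturedBall n k u (2 ^ (j + 1) - 1)) := card_le_card fun v hv => by
        rw [mem_filter] at hv
        have := Nat.lt_pow_succ_log_self (b := 2) (by norm_num) (dM n k u v)
        rw [hv.2] at this
        simp only [puncturedBall, mem_filter, hv.1, true_and]
        omega
  _ ≤ (2 * (2 ^ (j + 1) - 1) + 1) ^ k := card_puncturedBall_le hn u _
  _ ≤ (2 ^ (j + 2)) ^ k := Nat.pow_le_pow_left (by
        have := Nat.one_le_two_pow (n := j + 1)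
        rw [pow_succ 2 (j + 1)]
        omega) k

/-- Dyadic shells: the `j`-th of the `log₂ n_D + 1` shells has at most `2^{(j+2)k}` nodes,
each contributing at most `2^{-jk}` to `c(k)`. -/
lemma cnorm_le_cnormBound (hn : 0 < n) (u : Node n k) : cnorm n k u k ≤ cnormBound n k := by
  have hmaps : ∀ v ∈ others n k u, Nat.log 2 (dM n k u v) ∈ range (Nat.log 2 (maxDist n k) + 1) :=
    fun v _ => mem_range_succ_iff.mpr (Nat.log_mono_right (dM_le_maxDist u v))
  rw [cnorm, ← sum_fiberwise_of_maps_to hmaps, cnormBound,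
    show (Nat.log 2 (maxDist n k) + 1 : ℝ) = #(range (Nat.log 2 (maxDist n k) + 1)) by simp,
    ← nsmul_eq_mul]
  refine sum_le_card_nsmul _ _ _ fun j _ => ?_
  calc ∑ v ∈ (others n k u).filter (fun v => Nat.log 2 (dM n k u v) = j),
        (dM n k u v : ℝ) ^ (-(k : ℝ))
      ≤ #((others n k u).filter fun v => Nat.log 2 (dM n k u v) = j) • (((2 : ℝ) ^ j) ^ k)⁻¹ := by
        refine sum_le_card_nsmul _ _ _ fun v hv => ?_
        rw [mem_filter] at hv
        rw [Real.rpow_neg (by positivity), Real.rpow_natCast]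
        gcongr
        rw [← hv.2]
        exact_mod_cast Nat.pow_log_le_self 2 (by have := one_le_dM (mem_others.mp hv.1); omega)
  _ ≤ ((2 : ℝ) ^ (j + 2)) ^ k * (((2 : ℝ) ^ j) ^ k)⁻¹ := by
        rw [nsmul_eq_mul]
        gcongr
        exact_mod_cast card_shell_le hn u j
  _ = 4 ^ k := by
        rw [← inv_pow, ← mul_pow, pow_add, mul_right_comm, mul_inv_cancel₀ (by positivity)]
        norm_num

end Normalization

section Payoff

variable {n k : ℕ}

lemma sum_rpow_le_mul_cnorm {a b : ℝ} (ha : 0 ≤ a) (hab : b ≤ a - k) (u : Node n k) :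
    ∑ v ∈ others n k u, (dM n k u v : ℝ) ^ b ≤ (maxDist n k : ℝ) ^ a * cnorm n k u k := by
  rw [cnorm, mul_sum]
  refine sum_le_sum fun v hv => ?_
  have hd := dM_pos hv
  calc (dM n k u v : ℝ) ^ b ≤ (dM n k u v : ℝ) ^ (a - k) :=
        Real.rpow_le_rpow_of_exponent_le (by exact_mod_cast one_le_dM (mem_others.mp hv)) hab
  _ = (dM n k u v : ℝ) ^ a * (dM n k u v : ℝ) ^ (-(k : ℝ)) := by
        rw [sub_eq_add_neg, Real.rpow_add hd]
  _ ≤ (maxDist n k : ℝ) ^ a * (dM n k u v : ℝ) ^ (-(k : ℝ)) := by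
        gcongr
        exact_mod_cast dM_le_maxDist u v

lemma linkDist_eq_sum_div (u : Node n k) (s : ℝ) :
    linkDist n k u s = (∑ v ∈ others n k u, (dM n k u v : ℝ) ^ (1 - s)) / cnorm n k u s := by
  rw [linkDist, sum_div]
  refine sum_congr rfl fun v hv => ?_
  rw [linkProb, sub_eq_neg_add, Real.rpow_add (dM_pos hv), Real.rpow_one, div_mul_eq_mul_div]

lemma linkDist_le (hn : 0 < n) {a s : ℝ} (ha : 0 ≤ a) (has : 1 - s ≤ a - k) (u : Node n k) :
    linkDist n k u s ≤ (maxDist n k : ℝ) ^ a * cnormBound n k / cnorm n k u s := by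
  rw [linkDist_eq_sum_div]
  refine div_le_div_of_nonneg_right ((sum_rpow_le_mul_cnorm ha has u).trans ?_) (cnorm_nonneg u s)
  gcongr
  exact cnorm_le_cnormBound hn u

lemma recip_le (hn : 0 < n) {r : Node n k → ℝ} (hr : ∀ v, 0 ≤ r v) (u : Node n k) :
    recip n k r u ≤ 2 * k ^ k * cnormBound n k / cnorm n k u (r u) := by
  calc recip n k r u ≤ ∑ v ∈ others n k u,
        (dM n k u v : ℝ) ^ (-r u) / cnorm n k u (r u) *
          (2 * k ^ k * (dM n k u v : ℝ) ^ (-(k : ℝ))) :=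
        sum_le_sum fun v hv => mul_le_mul_of_nonneg_left
          (linkProb_le (hr v) (mem_others.mp hv).symm)
          (div_nonneg (by positivity) (cnorm_nonneg u _))
  _ = 2 * k ^ k * (∑ v ∈ others n k u, (dM n k u v : ℝ) ^ (-r u - k)) / cnorm n k u (r u) := by
        rw [mul_sum, sum_div]
        refine sum_congr rfl fun v hv => ?_
        rw [sub_eq_add_neg, Real.rpow_add (dM_pos hv)]
        ring
  _ ≤ 2 * k ^ k * cnormBound n k / cnorm n k u (r u) := by
        gcongr
        · exact cnorm_nonneg u _
        · have := sum_rpow_le_mul_cnorm (b := -r u - k) le_rfl (by linarith [hr u]) u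
          rw [Real.rpow_zero, one_mul] at this
          exact this.trans (cnorm_le_cnormBound hn u)

lemma payoff_le (hn : 0 < n) {r : Node n k → ℝ} (hr : ∀ v, 0 ≤ r v) {a : ℝ} (ha : 0 ≤ a)
    (u : Node n k) (hau : 1 - r u ≤ a - k) :
    payoff n k r u ≤
      2 * k ^ k * cnormBound n k ^ 2 * (maxDist n k : ℝ) ^ a / cnorm n k u (r u) ^ 2 := by
  calc payoff n k r u
      ≤ (maxDist n k : ℝ) ^ a * cnormBound n k / cnorm n k u (r u) *
          (2 * k ^ k * cnormBound n k / cnorm n k u (r u)) :=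
        mul_le_mul (linkDist_le hn ha hau u) (recip_le hn hr u)
          (sum_nonneg fun _ _ => mul_nonneg (div_nonneg (by positivity) (cnorm_nonneg _ _))
            (div_nonneg (by positivity) (cnorm_nonneg _ _)))
          (div_nonneg (by have := cnormBound_pos (n := n) (k := k); positivity)
            (cnorm_nonneg _ _))
  _ = _ := by ring

lemma linkDist_navigable_ge (hn : 2 ≤ n) (hk : 1 ≤ k) (u : Node n k) :
    ((n ^ k - 1 : ℕ) : ℝ) * (maxDist n k : ℝ) ^ (1 - (k : ℝ)) / cnormBound n k ≤
      linkDist n k u k := by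
  have hsum : ((n ^ k - 1 : ℕ) : ℝ) * (maxDist n k : ℝ) ^ (1 - (k : ℝ)) ≤
      ∑ v ∈ others n k u, (dM n k u v : ℝ) ^ (1 - (k : ℝ)) := by
    rw [← card_others u, ← nsmul_eq_mul]
    refine card_nsmul_le_sum _ _ _ fun v hv => Real.rpow_le_rpow_of_nonpos (dM_pos hv)
      (by exact_mod_cast dM_le_maxDist u v) (by simp [hk])
  rw [linkDist_eq_sum_div]
  exact div_le_div₀ (sum_nonneg fun _ _ => by positivity) hsum (cnorm_pos hn hk u k)
    (cnorm_le_cnormBound (by omega) u)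

lemma recip_navigable_ge (hn : 2 ≤ n) (hk : 1 ≤ k) (u : Node n k) :
    (cnormBound n k ^ 2)⁻¹ ≤ recip n k (fun _ => (k : ℝ)) u := by
  obtain ⟨w, hw, hdw⟩ := exists_dM_eq_one hn hk u
  have hinv : ∀ v : Node n k, (cnormBound n k)⁻¹ ≤ (cnorm n k v k)⁻¹ := fun v =>
    inv_anti₀ (cnorm_pos hn hk v k) (cnorm_le_cnormBound (by omega) v)
  calc (cnormBound n k ^ 2)⁻¹ = (cnormBound n k)⁻¹ * (cnormBound n k)⁻¹ := by ring
  _ ≤ linkProb n k u w k * linkProb n k w u k := by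
        rw [linkProb, linkProb, dM_comm w u, hdw, Nat.cast_one, Real.one_rpow, one_div, one_div]
        exact mul_le_mul (hinv u) (hinv w) (inv_nonneg.mpr cnormBound_pos.le)
          (inv_nonneg.mpr (cnorm_nonneg u k))
  _ ≤ recip n k (fun _ => (k : ℝ)) u :=
        single_le_sum (f := fun v => linkProb n k u v k * linkProb n k v u k)
          (fun v _ => mul_nonneg (linkProb_nonneg _ _ _) (linkProb_nonneg _ _ _)) hw

lemma payoff_navigable_ge (hn : 2 ≤ n) (hk : 1 ≤ k) (u : Node n k) :
    ((n ^ k - 1 : ℕ) : ℝ) * (maxDist n k : ℝ) ^ (1 - (k : ℝ)) / cnormBound n k ^ 3 ≤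
      payoff n k (fun _ => (k : ℝ)) u := by
  calc ((n ^ k - 1 : ℕ) : ℝ) * (maxDist n k : ℝ) ^ (1 - (k : ℝ)) / cnormBound n k ^ 3
      = ((n ^ k - 1 : ℕ) : ℝ) * (maxDist n k : ℝ) ^ (1 - (k : ℝ)) / cnormBound n k *
          (cnormBound n k ^ 2)⁻¹ := by ring
  _ ≤ linkDist n k u k * recip n k (fun _ => (k : ℝ)) u :=
        mul_le_mul (linkDist_navigable_ge hn hk u) (recip_navigable_ge hn hk u) (by positivity)
          (sum_nonneg fun _ _ => mul_nonneg (linkProb_nonneg _ _ _) (by positivity))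

end Payoff

section Comparison

variable {n k : ℕ}

lemma maxDist_pow_le (hn : 2 ≤ n) (hk : 1 ≤ k) : maxDist n k ^ k ≤ k ^ k * (n ^ k - 1) := by
  have hhalf : 2 * (n / 2) ^ k ≤ n ^ k :=
    calc 2 * (n / 2) ^ k ≤ 2 ^ k * (n / 2) ^ k :=
          Nat.mul_le_mul_right _ (Nat.le_self_pow (by omega) 2)
    _ = (2 * (n / 2)) ^ k := (mul_pow _ _ _).symm
    _ ≤ n ^ k := Nat.pow_le_pow_left (Nat.mul_div_le n 2) k
  have hone : 1 ≤ (n / 2) ^ k := Nat.one_le_pow _ _ (by omega)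
  rw [maxDist, mul_pow]
  exact Nat.mul_le_mul_left _ (by omega)

lemma pow_sub_one_pos (hn : 2 ≤ n) (hk : 1 ≤ k) : 0 < n ^ k - 1 := by
  have := Nat.le_self_pow (show k ≠ 0 by omega) n
  omega

lemma cast_maxDist_pow_le (hn : 2 ≤ n) (hk : 1 ≤ k) :
    (maxDist n k : ℝ) ^ k ≤ k ^ k * ((n ^ k - 1 : ℕ) : ℝ) := by
  exact_mod_cast maxDist_pow_le hn hk

lemma one_le_cast_maxDist (hn : 2 ≤ n) (hk : 1 ≤ k) : (1 : ℝ) ≤ maxDist n k := by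
  have : 1 ≤ n / 2 := by omega
  exact_mod_cast Nat.mul_le_mul hk this

lemma payoff_le_of_le_sub (hn : 2 ≤ n) (hk : 1 ≤ k) {γ : ℝ} (hγ : 0 ≤ γ) {r : Node n k → ℝ}
    (hr : ∀ v, 0 ≤ r v) (u : Node n k) (hs : r u ≤ k - γ) :
    payoff n k r u ≤ 2 * k ^ (4 * k) * cnormBound n k ^ 5 * (maxDist n k : ℝ) ^ (-γ) *
      (((n ^ k - 1 : ℕ) : ℝ) * (maxDist n k : ℝ) ^ (1 - (k : ℝ)) / cnormBound n k ^ 3) := by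
  set D : ℝ := (maxDist n k : ℝ)
  set N : ℝ := ((n ^ k - 1 : ℕ) : ℝ)
  set Λ := cnormBound n k
  set s := r u
  have hD : 1 ≤ D := one_le_cast_maxDist hn hk
  have hN : 0 < N := Nat.cast_pos.mpr (pow_sub_one_pos hn hk)
  have hc : N * D ^ (-s) ≤ cnorm n k u s := by
    simpa [puncturedBall_maxDist, card_others] using card_mul_rpow_le_cnorm (hr u) u (maxDist n k)
  have hD0 : 0 < D := by linarith
  calc payoff n k r u ≤ 2 * k ^ k * Λ ^ 2 * D ^ ((k : ℝ) + 1 - s) / cnorm n k u s ^ 2 :=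
        payoff_le (by omega) hr (by linarith) u (by linarith)
  _ ≤ 2 * k ^ k * Λ ^ 2 * D ^ ((k : ℝ) + 1 - s) / (N * D ^ (-s)) ^ 2 := by gcongr
  _ = 2 * k ^ k * Λ ^ 2 * D ^ ((k : ℝ) + 1 + s) / N ^ 2 := by
        rw [show (k : ℝ) + 1 - s = (k + 1 + s) + -s + -s by ring, Real.rpow_add hD0,
          Real.rpow_add hD0]
        field_simp
  _ ≤ 2 * k ^ k * Λ ^ 2 * ((D ^ k) ^ 3 * D ^ (1 - (k : ℝ)) * D ^ (-γ)) / N ^ 2 := by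
        have hsplit : (D ^ k) ^ 3 * D ^ (1 - (k : ℝ)) * D ^ (-γ) = D ^ (2 * k + 1 - γ) := by
          rw [← pow_mul, ← Real.rpow_natCast D (k * 3), ← Real.rpow_add hD0, ← Real.rpow_add hD0]
          push_cast
          ring_nf
        rw [hsplit]
        gcongr
        linarith
  _ ≤ 2 * k ^ k * Λ ^ 2 * ((k ^ k * N) ^ 3 * D ^ (1 - (k : ℝ)) * D ^ (-γ)) / N ^ 2 := by
        gcongr
        exact cast_maxDist_pow_le hn hk
  _ = _ := by
        field_simp
        ring

lemma payoff_le_of_add_le (hn : 2 ≤ n) (hk : 1 ≤ k) {γ : ℝ} (hγ : γ ≤ 1) {r : Node n k → ℝ}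
    (hr : ∀ v, 0 ≤ r v) (u : Node n k) (hs : k + γ ≤ r u) :
    payoff n k r u ≤ 2 * k ^ (4 * k) * cnormBound n k ^ 5 * (maxDist n k : ℝ) ^ (-γ) *
      (((n ^ k - 1 : ℕ) : ℝ) * (maxDist n k : ℝ) ^ (1 - (k : ℝ)) / cnormBound n k ^ 3) := by
  set D : ℝ := (maxDist n k : ℝ)
  set N : ℝ := ((n ^ k - 1 : ℕ) : ℝ)
  set Λ := cnormBound n k
  have hD0 : 0 < D := zero_lt_one.trans_le (one_le_cast_maxDist hn hk)
  have hΛ : 0 < Λ := cnormBound_pos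
  calc payoff n k r u ≤ 2 * k ^ k * Λ ^ 2 * D ^ (1 - γ) / cnorm n k u (r u) ^ 2 :=
        payoff_le (by omega) hr (by linarith) u (by linarith)
  _ ≤ 2 * k ^ k * Λ ^ 2 * D ^ (1 - γ) :=
        div_le_self (by positivity) (one_le_pow₀ (one_le_cnorm hn hk u _))
  _ = 2 * k ^ k * Λ ^ 2 * (D ^ k * D ^ (1 - (k : ℝ)) * D ^ (-γ)) := by
        rw [← Real.rpow_natCast D k, ← Real.rpow_add hD0, ← Real.rpow_add hD0]
        ring_nf
  _ ≤ 2 * k ^ k * Λ ^ 2 * (k ^ k * N * D ^ (1 - (k : ℝ)) * D ^ (-γ)) := by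
        gcongr
        exact cast_maxDist_pow_le hn hk
  _ = 2 * k ^ (2 * k) * Λ ^ 5 * D ^ (-γ) * (N * D ^ (1 - (k : ℝ)) / Λ ^ 3) := by
        field_simp
        ring
  _ ≤ _ := by
        gcongr
        · exact_mod_cast hk
        · omega

lemma payoff_lt_payoff_navigable (hn : 2 ≤ n) (hk : 1 ≤ k) {γ : ℝ} (hγ₀ : 0 ≤ γ) (hγ₁ : γ ≤ 1)
    (hsmall : 2 * k ^ (4 * k) * cnormBound n k ^ 5 < (maxDist n k : ℝ) ^ γ)
    {r : Node n k → ℝ} (hr : ∀ v, 0 ≤ r v) (u : Node n k) (hs : r u ≤ k - γ ∨ k + γ ≤ r u) :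
    payoff n k r u < payoff n k (fun _ => (k : ℝ)) u := by
  have hD0 : (0 : ℝ) < maxDist n k := zero_lt_one.trans_le (one_le_cast_maxDist hn hk)
  have hN : (0 : ℝ) < ((n ^ k - 1 : ℕ) : ℝ) := Nat.cast_pos.mpr (pow_sub_one_pos hn hk)
  have hε : 2 * k ^ (4 * k) * cnormBound n k ^ 5 * (maxDist n k : ℝ) ^ (-γ) < 1 := by
    rwa [Real.rpow_neg hD0.le, ← div_eq_mul_inv, div_lt_one (by positivity)]
  calc payoff n k r u
      ≤ 2 * k ^ (4 * k) * cnormBound n k ^ 5 * (maxDist n k : ℝ) ^ (-γ) *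
          (((n ^ k - 1 : ℕ) : ℝ) * (maxDist n k : ℝ) ^ (1 - (k : ℝ)) / cnormBound n k ^ 3) :=
        hs.elim (payoff_le_of_le_sub hn hk hγ₀ hr u) (payoff_le_of_add_le hn hk hγ₁ hr u)
  _ < ((n ^ k - 1 : ℕ) : ℝ) * (maxDist n k : ℝ) ^ (1 - (k : ℝ)) / cnormBound n k ^ 3 :=
        mul_lt_of_lt_one_left (by have := cnormBound_pos (n := n) (k := k); positivity) hε
  _ ≤ payoff n k (fun _ => (k : ℝ)) u := payoff_navigable_ge hn hk u

end Comparison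

lemma InSigma.nonneg {γ s : ℝ} (hγ : 0 ≤ γ) (h : InSigma γ s) : 0 ≤ s := by
  obtain ⟨m, rfl⟩ := h
  positivity

lemma InSigma.le_sub_or_add_le {γ s t : ℝ} (hγ : 0 ≤ γ) (hs : InSigma γ s) (ht : InSigma γ t)
    (hst : s ≠ t) : s ≤ t - γ ∨ t + γ ≤ s := by
  obtain ⟨a, rfl⟩ := hs
  obtain ⟨b, rfl⟩ := ht
  rcases lt_or_gt_of_ne (fun h : a = b => hst (by rw [h])) with h | h
  · left
    have : (a : ℝ) + 1 ≤ b := by exact_mod_cast h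
    nlinarith
  · right
    have : (b : ℝ) + 1 ≤ a := by exact_mod_cast h
    nlinarith

lemma inSigma_inv_natCast {g : ℕ} (hg : g ≠ 0) (k : ℕ) : InSigma (g : ℝ)⁻¹ k :=
  ⟨k * g, by push_cast; field_simp⟩

lemma isStrongNash_of_forall_payoff_lt {n k : ℕ} {γ : ℝ} {r₀ : Node n k → ℝ}
    (hr₀ : ValidProfile n k γ r₀)
    (h : ∀ r, ValidProfile n k γ r → ∀ u, r u ≠ r₀ u → payoff n k r u < payoff n k r₀ u) :
    IsStrongNash n k γ r₀ := by
  rintro ⟨C, s, -, hsC, hge, w, -, hgt⟩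
  by_cases hdev : ∃ v ∈ C, s v ≠ r₀ v
  · obtain ⟨v, hvC, hv⟩ := hdev
    have hvalid : ValidProfile n k γ (fun x => if x ∈ C then s x else r₀ x) := fun x => by
      by_cases hx : x ∈ C <;> simp [hx, hsC, hr₀ x]
    exact (hge v hvC).not_gt (h _ hvalid v (by simpa [hvC] using hv))
  · push Not at hdev
    have hsame : (fun x => if x ∈ C then s x else r₀ x) = r₀ := funext fun x => by
      by_cases hx : x ∈ C <;> simp [hx, hdev]
    exact hgt.ne' (by rw [hsame])

open Filter Asymptotics in
lemma eventually_mul_log_pow_lt_rpow (C : ℝ) (m : ℕ) {γ : ℝ} (hγ : 0 < γ) :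
    ∀ᶠ D : ℕ in atTop, C * ((Nat.log 2 D : ℝ) + 1) ^ m < (D : ℝ) ^ γ := by
  have hlog : (fun D : ℕ => Real.log D ^ m) =o[atTop] (fun D : ℕ => (D : ℝ) ^ γ) := by
    have := (isLittleO_log_rpow_rpow_atTop (m : ℝ) hγ).comp_tendsto tendsto_natCast_atTop_atTop
    simp only [Real.rpow_natCast] at this
    exact this
  have hbig : (fun D : ℕ => C * ((Nat.log 2 D : ℝ) + 1) ^ m) =O[atTop]
      (fun D : ℕ => Real.log D ^ m) := by
    refine IsBigO.of_bound (‖C‖ * (2 / Real.log 2) ^ m) ?_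
    filter_upwards [eventually_ge_atTop 2] with D hD
    have hD' : (2 : ℝ) ≤ D := by exact_mod_cast hD
    have hlogb : 1 ≤ Real.logb 2 D :=
      (Real.le_logb_iff_rpow_le (by norm_num) (by linarith)).mpr (by simpa using hD')
    have hL : (Nat.log 2 D : ℝ) + 1 ≤ 2 / Real.log 2 * Real.log D := by
      have := Real.natLog_le_logb D 2
      push_cast at this
      rw [div_mul_eq_mul_div, mul_div_assoc, ← Real.logb]
      linarith
    rw [norm_mul, norm_pow, norm_pow,
      Real.norm_of_nonneg (by positivity : (0 : ℝ) ≤ Nat.log 2 D + 1),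
      Real.norm_of_nonneg (Real.log_nonneg (by linarith) : 0 ≤ Real.log D), mul_assoc, ← mul_pow]
    gcongr
  filter_upwards [(hbig.trans_isLittleO hlog).def one_half_pos, eventually_gt_atTop 0]
    with D hle hD
  have hpos : (0 : ℝ) < (D : ℝ) ^ γ := by positivity
  rw [Real.norm_eq_abs, Real.norm_eq_abs, abs_of_pos hpos] at hle
  linarith [le_abs_self (C * ((Nat.log 2 D : ℝ) + 1) ^ m)]

open Filter in
lemma eventually_mul_cnormBound_pow_lt_rpow {k : ℕ} (hk : 1 ≤ k) {γ : ℝ} (hγ : 0 < γ) :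
    ∀ᶠ n in atTop, 2 * (k : ℝ) ^ (4 * k) * cnormBound n k ^ 5 < (maxDist n k : ℝ) ^ γ := by
  have hmaxDist : Tendsto (fun n => maxDist n k) atTop atTop :=
    tendsto_atTop_mono (fun n => Nat.le_mul_of_pos_left _ hk)
      (Nat.tendsto_div_const_atTop two_ne_zero)
  filter_upwards [hmaxDist.eventually
    (eventually_mul_log_pow_lt_rpow (2 * k ^ (4 * k) * 4 ^ (5 * k)) 5 hγ)] with n hn
  convert hn using 1
  rw [cnormBound]
  ring

end DRB

/-- For sufficiently large `n`, in every valid profile `r` every node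
`u` with `r_u ≠ k` gets strictly smaller payoff than its payoff in the navigable
profile `r ≡ k`; consequently `r ≡ k` is a strong Nash equilibrium. -/
theorem navigable_is_strong_nash (k g : ℕ) (hk : 1 ≤ k) (hg : 2 ≤ g) :
    ∃ n0 : ℕ, ∀ n : ℕ, n0 ≤ n →
      (∀ r : DRB.Node n k → ℝ, DRB.ValidProfile n k (g : ℝ)⁻¹ r →
        ∀ u : DRB.Node n k, r u ≠ (k : ℝ) →
          DRB.payoff n k r u < DRB.payoff n k (fun _ => (k : ℝ)) u) ∧
      DRB.IsStrongNash n k (g : ℝ)⁻¹ (fun _ => (k : ℝ)) := by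
  have hγ₀ : (0 : ℝ) < (g : ℝ)⁻¹ := inv_pos.mpr (by exact_mod_cast (by omega : 0 < g))
  have hγ₁ : (g : ℝ)⁻¹ ≤ 1 := inv_le_one_of_one_le₀ (by exact_mod_cast (by omega : 1 ≤ g))
  have hk_mem : DRB.InSigma (g : ℝ)⁻¹ k := DRB.inSigma_inv_natCast (by omega) k
  obtain ⟨n₀, hn₀⟩ := Filter.eventually_atTop.mp
    ((DRB.eventually_mul_cnormBound_pow_lt_rpow hk hγ₀).and (Filter.eventually_ge_atTop 2))
  refine ⟨n₀, fun n hn => ?_⟩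
  obtain ⟨hsmall_n, hn₂⟩ := hn₀ n hn
  have hlt : ∀ r : DRB.Node n k → ℝ, DRB.ValidProfile n k (g : ℝ)⁻¹ r →
      ∀ u, r u ≠ (k : ℝ) → DRB.payoff n k r u < DRB.payoff n k (fun _ => (k : ℝ)) u :=
    fun r hr u hu => DRB.payoff_lt_payoff_navigable hn₂ hk hγ₀.le hγ₁ hsmall_n
      (fun v => (hr v).nonneg hγ₀.le) u ((hr u).le_sub_or_add_le hγ₀.le hk_mem hu)
  exact ⟨hlt, DRB.isStrongNash_of_forall_payoff_lt (fun _ => hk_mem) hlt⟩
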